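/- Let I be an instance of (3,B2)-SAT with variables x₁,…,xₙ and clauses c₁,…,c_m, where the three literals of each clause c are listed in a fixed order, and for each variable x its two positive occurrences are in clauses c₁(x), c₂(x) and its two negative occurrences in clauses c₃(x), c₄(x). Let G = (V,E) be the finite simple graph built as follows, together with a set U ⊆ E of permitted edges. For each clause c take eight vertices ℓ¹_c, ℓ²_c, ℓ³_c, 1_c, 2_c, 3_c, a_c, b_c with forbidden edges ℓ¹_c1_c, ℓ²_c2_c, ℓ³_c3_c and permitted edges 1_ca_c, 2_ca_c, 2_cb_c, 3_cb_c. For each variable x take twelve vertices 1_x, 1^{c₁}_x, 1^{c₂}_x, x^{c₁}, x^{c₂}, 2_x, 2^{c₃}_x, 2^{c₄}_x, ¬x^{c₃}, ¬x^{c₄}, 3_x, 4_x with forbidden edges 1_x1^{c₁}_x, 1_x1^{c₂}_x, 2_x2^{c₃}_x, 2_x2^{c₄}_x, 3_x4_x and permitted edges 1_x3_x, 2_x3_x, 1^{c₁}_xx^{c₁}, 1^{c₂}_xx^{c₂}, 2^{c₃}_x¬x^{c₃}, 2^{c₄}_x¬x^{c₄}. For each clause c and each position i ∈ {1,2,3},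 if the i-th literal of c is the j-th positive occurrence (j ∈ {1,2}) of a variable x, add the permitted crossing edge x^{c_j(x)}ℓⁱ_c, and if it is the j-th negative occurrence (j ∈ {3,4}) of x, add the permitted crossing edge ¬x^{c_j(x)}ℓⁱ_c. Let U be the set of all permitted edges. Then I is satisfiable if and only if G has a maximal matching S with S ⊆ U. -/

import Mathlib

/-- Vertices of the graph built from a (3,B2)-SAT instance for Ext Edge Matching:
per clause `c` the vertices `ℓ¹_c, ℓ²_c, ℓ³_c` (`lv`), `1_c, 2_c, 3_c` (`cnum`) and two
unnamed vertices `a_c, b_c`; per variable `x` the twelve vertices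
`1_x, 1^{c₁}_x, 1^{c₂}_x, x^{c₁}, x^{c₂}, 2_x, 2^{c₃}_x, 2^{c₄}_x, ¬x^{c₃}, ¬x^{c₄}, 3_x, 4_x`. -/
inductive V12 (n m : ℕ) : Type
  | lv : Fin m → Fin 3 → V12 n m        -- ℓⁱ_c
  | cnum : Fin m → Fin 3 → V12 n m      -- 1_c, 2_c, 3_c
  | ca : Fin m → V12 n m                -- a_c
  | cb : Fin m → V12 n m                -- b_c
  | v1 : Fin n → V12 n m                -- 1_x
  | p1 : Fin n → Fin 2 → V12 n m        -- 1^{c₁}_x, 1^{c₂}_x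
  | posOcc : Fin n → Fin 2 → V12 n m    -- x^{c₁}, x^{c₂}
  | v2 : Fin n → V12 n m                -- 2_x
  | p2 : Fin n → Fin 2 → V12 n m        -- 2^{c₃}_x, 2^{c₄}_x
  | negOcc : Fin n → Fin 2 → V12 n m    -- ¬x^{c₃}, ¬x^{c₄}
  | v3 : Fin n → V12 n m                -- 3_x
  | v4 : Fin n → V12 n m                -- 4_x

/-- The forbidden edges. -/
def F12 (n m : ℕ) : Set (Sym2 (V12 n m)) :=
  {e | (∃ j : Fin m, ∃ k : Fin 3, e = s(V12.lv j k, V12.cnum j k)) ∨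
       (∃ i : Fin n, ∃ t : Fin 2,
          e = s(V12.v1 i, V12.p1 i t) ∨ e = s(V12.v2 i, V12.p2 i t)) ∨
       (∃ i : Fin n, e = s(V12.v3 i, V12.v4 i))}

/-- The permitted edges, including the crossing edges connecting the `j`-th positive
(resp. negative) occurrence vertex of a variable to the corresponding literal vertex
in the clause of that occurrence. -/
def U12 (n m : ℕ) (lit : Fin m → Fin 3 → Fin n × Bool)
    (occP occN : Fin n → Fin 2 → Fin m) : Set (Sym2 (V12 n m)) :=
  {e | (∃ j : Fin m,
          e = s(V12.cnum j 0, V12.ca j) ∨ e = s(V12.cnum j 1, V12.ca j) ∨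
          e = s(V12.cnum j 1, V12.cb j) ∨ e = s(V12.cnum j 2, V12.cb j)) ∨
       (∃ i : Fin n, e = s(V12.v1 i, V12.v3 i) ∨ e = s(V12.v2 i, V12.v3 i)) ∨
       (∃ i : Fin n, ∃ t : Fin 2,
          e = s(V12.p1 i t, V12.posOcc i t) ∨ e = s(V12.p2 i t, V12.negOcc i t)) ∨
       (∃ i : Fin n, ∃ t : Fin 2, ∃ k : Fin 3,
          (lit (occP i t) k = (i, true) ∧ e = s(V12.posOcc i t, V12.lv (occP i t) k)) ∨
          (lit (occN i t) k = (i, false) ∧ e = s(V12.negOcc i t, V12.lv (occN i t) k)))}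

/-- All edges of the constructed graph. -/
def E12 (n m : ℕ) (lit : Fin m → Fin 3 → Fin n × Bool)
    (occP occN : Fin n → Fin 2 → Fin m) : Set (Sym2 (V12 n m)) :=
  U12 n m lit occP occN ∪ F12 n m

/-- A set of edges is a matching: no two distinct edges of it share an endpoint. -/
def IsMatchingSet {V : Type*} (M : Set (Sym2 V)) : Prop :=
  ∀ e ∈ M, ∀ f ∈ M, e ≠ f → ∀ v : V, ¬ (v ∈ e ∧ v ∈ f)

/-! A satisfying assignment `T`, together with a true literal position `u c` in each clause,
gives every vertex a partner: `3_x` goes to `1_x` if `x` is true and to `2_x` otherwise, the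
occurrence vertices of the true literals of `x` go to their literal vertices and the others to
`1^c_x` or `2^c_x`, and the clause gadget covers every `i_c` except the one at position `u c`.
The permitted edges between mutual partners form a matching that saturates an endpoint of every
edge of `G`.

Conversely, let `S ⊆ U` be a maximal matching. The permitted edges at `1_c, 2_c, 3_c` all end in
`a_c` or `b_c`, so at most two of these vertices are matched and the forbidden edges `ℓⁱ_c i_c`
force some `ℓⁱ_c` to be matched, necessarily by a crossing edge from an occurrence vertex of the
variable `x` of the `i`-th literal. That blocks `1^c_x` (resp. `2^c_x`), so the forbidden edge at
`1_x` (resp. `2_x`) forces `1_x 3_x` (resp. `2_x 3_x`) into `S`. Hence setting `x` true iff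
`1_x 3_x ∈ S` satisfies every clause. -/

section Matching

variable {V : Type*}

def Saturates (S : Set (Sym2 V)) (v : V) : Prop := ∃ e ∈ S, v ∈ e

lemma IsMatchingSet.eq_of_mem_of_mem {S : Set (Sym2 V)} (hS : IsMatchingSet S)
    {e f : Sym2 V} (he : e ∈ S) (hf : f ∈ S) {v : V} (hve : v ∈ e) (hvf : v ∈ f) : e = f := by
  by_contra hne
  exact hS e he f hf hne v ⟨hve, hvf⟩

lemma IsMatchingSet.insert_iff {S : Set (Sym2 V)} (hS : IsMatchingSet S) {e : Sym2 V}
    (he : e ∉ S) : IsMatchingSet (insert e S) ↔ ∀ v ∈ e, ¬ Saturates S v := by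
  constructor
  · rintro hins v hve ⟨g, hg, hvg⟩
    exact hins e (Set.mem_insert _ _) g (Set.mem_insert_of_mem _ hg)
      (fun h => he (h ▸ hg)) v ⟨hve, hvg⟩
  · intro hfree a ha b hb hab v hv
    rcases ha with rfl | ha <;> rcases hb with rfl | hb
    · exact hab rfl
    · exact hfree v hv.1 ⟨b, hb, hv.2⟩
    · exact hfree v hv.2 ⟨a, ha, hv.1⟩
    · exact hS a ha b hb hab v hv

def partnerMatching (U : Set (Sym2 V)) (p : V → V) : Set (Sym2 V) :=
  {e | e ∈ U ∧ ∀ v ∈ e, e = s(v, p v)}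

lemma partnerMatching_subset (U : Set (Sym2 V)) (p : V → V) : partnerMatching U p ⊆ U :=
  fun _ he => he.1

lemma isMatchingSet_partnerMatching (U : Set (Sym2 V)) (p : V → V) :
    IsMatchingSet (partnerMatching U p) :=
  fun _ he _ hf hne v hv => hne ((he.2 v hv.1).trans (hf.2 v hv.2).symm)

lemma mk_mem_partnerMatching {U : Set (Sym2 V)} {p : V → V} {v : V}
    (hU : s(v, p v) ∈ U) (hp : p (p v) = v) : s(v, p v) ∈ partnerMatching U p := by
  refine ⟨hU, fun w hw => ?_⟩
  rcases Sym2.mem_iff.1 hw with rfl | rfl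
  · rfl
  · rw [hp, Sym2.eq_swap]

lemma saturates_partnerMatching {U : Set (Sym2 V)} {p : V → V} {v : V}
    (hU : s(v, p v) ∈ U) (hp : p (p v) = v) : Saturates (partnerMatching U p) v :=
  ⟨_, mk_mem_partnerMatching hU hp, Sym2.mem_mk_left _ _⟩

end Matching

namespace V12
variable {n m : ℕ}

/-- `u c` is the position of a true literal of clause `c`, and `kP x t` (`kN x t`) the position
of `x` (`¬x`) in clause `occP x t` (`occN x t`). Only mutual partners are matched, so the values
at vertices left unmatched, such as `4_x` or `(u c)_c`, are arbitrary. -/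
def partner (lit : Fin m → Fin 3 → Fin n × Bool) (occP occN : Fin n → Fin 2 → Fin m)
    (T : Fin n → Bool) (u : Fin m → Fin 3) (kP kN : Fin n → Fin 2 → Fin 3) :
    V12 n m → V12 n m
  | lv j k => if (lit j k).2 then
      posOcc (lit j k).1 (if occP (lit j k).1 0 = j then 0 else 1)
    else negOcc (lit j k).1 (if occN (lit j k).1 0 = j then 0 else 1)
  | cnum j k => if k = 0 then ca j else if k = 2 then cb j else if u j = 0 then ca j else cb j
  | ca j => if u j = 0 then cnum j 1 else cnum j 0
  | cb j => if u j = 2 then cnum j 1 else cnum j 2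
  | v1 i => v3 i
  | v2 i => v3 i
  | v3 i => if T i then v1 i else v2 i
  | v4 i => v4 i
  | p1 i t => posOcc i t
  | posOcc i t => if T i then lv (occP i t) (kP i t) else p1 i t
  | p2 i t => negOcc i t
  | negOcc i t => if T i then p2 i t else lv (occN i t) (kN i t)

section Forward

variable {lit : Fin m → Fin 3 → Fin n × Bool} {occP occN : Fin n → Fin 2 → Fin m}
  {T : Fin n → Bool} {u : Fin m → Fin 3} {kP kN : Fin n → Fin 2 → Fin 3}

local notation "S" => partnerMatching (U12 n m lit occP occN) (partner lit occP occN T u kP kN)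

lemma saturates_ca (j : Fin m) : Saturates S (ca j) := by
  refine saturates_partnerMatching ?_ ?_ <;> by_cases h : u j = 0 <;> simp [partner, U12, h]

lemma saturates_cb (j : Fin m) : Saturates S (cb j) := by
  refine saturates_partnerMatching ?_ ?_ <;> by_cases h : u j = 2 <;> simp [partner, U12, h]

lemma saturates_cnum {j : Fin m} {k : Fin 3} (hk : k ≠ u j) : Saturates S (cnum j k) := by
  obtain h | h | h : u j = 0 ∨ u j = 1 ∨ u j = 2 := by omega
  all_goals refine saturates_partnerMatching ?_ ?_ <;> fin_cases k <;> simp_all [partner, U12]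

lemma saturates_v3 (i : Fin n) : Saturates S (v3 i) := by
  refine saturates_partnerMatching ?_ ?_ <;> cases h : T i <;> simp [partner, U12, h]

lemma saturates_v1 {i : Fin n} (hT : T i = true) : Saturates S (v1 i) := by
  refine saturates_partnerMatching ?_ ?_ <;> simp [partner, U12, hT]

lemma saturates_v2 {i : Fin n} (hT : T i = false) : Saturates S (v2 i) := by
  refine saturates_partnerMatching ?_ ?_ <;> simp [partner, U12, hT]

lemma saturates_p1 {i : Fin n} (t : Fin 2) (hT : T i = false) : Saturates S (p1 i t) := by
  refine saturates_partnerMatching ?_ ?_ <;> fin_cases t <;> simp [partner, U12, hT]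

lemma saturates_p2 {i : Fin n} (t : Fin 2) (hT : T i = true) : Saturates S (p2 i t) := by
  refine saturates_partnerMatching ?_ ?_ <;> fin_cases t <;> simp [partner, U12, hT]

variable (T u) in
lemma mk_posOcc_partner_mem (hkP : ∀ i t, lit (occP i t) (kP i t) = (i, true))
    (hoccPinj : ∀ i : Fin n, occP i 0 ≠ occP i 1) (i : Fin n) (t : Fin 2) :
    s(posOcc i t, partner lit occP occN T u kP kN (posOcc i t)) ∈ S := by
  refine mk_mem_partnerMatching ?_ ?_ <;> cases h : T i <;> fin_cases t <;>
    simp [partner, U12, h, hkP, hoccPinj]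

variable (T u) in
lemma mk_negOcc_partner_mem (hkN : ∀ i t, lit (occN i t) (kN i t) = (i, false))
    (hoccNinj : ∀ i : Fin n, occN i 0 ≠ occN i 1) (i : Fin n) (t : Fin 2) :
    s(negOcc i t, partner lit occP occN T u kP kN (negOcc i t)) ∈ S := by
  refine mk_mem_partnerMatching ?_ ?_ <;> cases h : T i <;> fin_cases t <;>
    simp [partner, U12, h, hkN, hoccNinj]

lemma saturates_lv (hdist : ∀ j : Fin m, Function.Injective fun k : Fin 3 => (lit j k).1)
    (hkP : ∀ i t, lit (occP i t) (kP i t) = (i, true))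
    (hkN : ∀ i t, lit (occN i t) (kN i t) = (i, false))
    (hoccPinj : ∀ i : Fin n, occP i 0 ≠ occP i 1) (hoccNinj : ∀ i : Fin n, occN i 0 ≠ occN i 1)
    (hoccPall : ∀ (i : Fin n) (j : Fin m) (k : Fin 3),
      lit j k = (i, true) → ∃ t : Fin 2, occP i t = j)
    (hoccNall : ∀ (i : Fin n) (j : Fin m) (k : Fin 3),
      lit j k = (i, false) → ∃ t : Fin 2, occN i t = j)
    {j : Fin m} {k : Fin 3} (hT : T (lit j k).1 = (lit j k).2) : Saturates S (lv j k) := by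
  generalize hl : lit j k = l at hT
  obtain ⟨i, b⟩ := l
  cases b
  · obtain ⟨t, rfl⟩ := hoccNall i j k hl
    have hk : kN i t = k := hdist (occN i t) (by simp only [hkN, hl])
    refine ⟨_, mk_negOcc_partner_mem T u hkN hoccNinj i t, ?_⟩
    simp [partner, hT, hk]
  · obtain ⟨t, rfl⟩ := hoccPall i j k hl
    have hk : kP i t = k := hdist (occP i t) (by simp only [hkP, hl])
    refine ⟨_, mk_posOcc_partner_mem T u hkP hoccPinj i t, ?_⟩
    simp [partner, hT, hk]

lemma exists_saturates_of_mem_E12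
    (hdist : ∀ j : Fin m, Function.Injective fun k : Fin 3 => (lit j k).1)
    (hkP : ∀ i t, lit (occP i t) (kP i t) = (i, true))
    (hkN : ∀ i t, lit (occN i t) (kN i t) = (i, false))
    (hoccPinj : ∀ i : Fin n, occP i 0 ≠ occP i 1) (hoccNinj : ∀ i : Fin n, occN i 0 ≠ occN i 1)
    (hoccPall : ∀ (i : Fin n) (j : Fin m) (k : Fin 3),
      lit j k = (i, true) → ∃ t : Fin 2, occP i t = j)
    (hoccNall : ∀ (i : Fin n) (j : Fin m) (k : Fin 3),
      lit j k = (i, false) → ∃ t : Fin 2, occN i t = j)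
    (hu : ∀ j, T (lit j (u j)).1 = (lit j (u j)).2)
    {e : Sym2 (V12 n m)} (he : e ∈ E12 n m lit occP occN) : ∃ v ∈ e, Saturates S v := by
  have hpos i t : Saturates S (posOcc i t) :=
    ⟨_, mk_posOcc_partner_mem T u hkP hoccPinj i t, Sym2.mem_mk_left _ _⟩
  have hneg i t : Saturates S (negOcc i t) :=
    ⟨_, mk_negOcc_partner_mem T u hkN hoccNinj i t, Sym2.mem_mk_left _ _⟩
  rcases he with (⟨j, h | h | h | h⟩ | ⟨i, h | h⟩ | ⟨i, t, h | h⟩ | ⟨i, t, k, ⟨-, h⟩ | ⟨-, h⟩⟩) |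
    (⟨j, k, h⟩ | ⟨i, t, h | h⟩ | ⟨i, h⟩) <;> subst h
  · exact ⟨ca j, by simp, saturates_ca j⟩
  · exact ⟨ca j, by simp, saturates_ca j⟩
  · exact ⟨cb j, by simp, saturates_cb j⟩
  · exact ⟨cb j, by simp, saturates_cb j⟩
  · exact ⟨v3 i, by simp, saturates_v3 i⟩
  · exact ⟨v3 i, by simp, saturates_v3 i⟩
  · exact ⟨posOcc i t, by simp, hpos i t⟩
  · exact ⟨negOcc i t, by simp, hneg i t⟩
  · exact ⟨posOcc i t, by simp, hpos i t⟩
  · exact ⟨negOcc i t, by simp, hneg i t⟩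
  · by_cases hk : k = u j
    · subst hk
      exact ⟨lv j (u j), by simp,
        saturates_lv hdist hkP hkN hoccPinj hoccNinj hoccPall hoccNall (hu j)⟩
    · exact ⟨cnum j k, by simp, saturates_cnum hk⟩
  · cases hT : T i
    · exact ⟨p1 i t, by simp, saturates_p1 t hT⟩
    · exact ⟨v1 i, by simp, saturates_v1 hT⟩
  · cases hT : T i
    · exact ⟨v2 i, by simp, saturates_v2 hT⟩
    · exact ⟨p2 i t, by simp, saturates_p2 t hT⟩
  · exact ⟨v3 i, by simp, saturates_v3 i⟩

end Forward
end V12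

namespace U12
open V12

variable {n m : ℕ} {lit : Fin m → Fin 3 → Fin n × Bool} {occP occN : Fin n → Fin 2 → Fin m}
  {g : Sym2 (V12 n m)}

lemma eq_of_lv_mem {j : Fin m} {k : Fin 3} (hg : g ∈ U12 n m lit occP occN) (hv : lv j k ∈ g) :
    (∃ i t, lit j k = (i, true) ∧ g = s(posOcc i t, lv j k)) ∨
    (∃ i t, lit j k = (i, false) ∧ g = s(negOcc i t, lv j k)) := by
  rcases hg with ⟨_, h | h | h | h⟩ | ⟨_, h | h⟩ | ⟨_, _, h | h⟩ | ⟨_, _, _, ⟨_, h⟩ | ⟨_, h⟩⟩ <;>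
    subst h <;> rcases Sym2.mem_iff.1 hv with hv | hv <;> simp_all

lemma eq_of_cnum0_mem {j : Fin m} (hg : g ∈ U12 n m lit occP occN) (hv : cnum j 0 ∈ g) :
    g = s(cnum j 0, ca j) := by
  rcases hg with ⟨_, h | h | h | h⟩ | ⟨_, h | h⟩ | ⟨_, _, h | h⟩ | ⟨_, _, _, ⟨_, h⟩ | ⟨_, h⟩⟩ <;>
    subst h <;> rcases Sym2.mem_iff.1 hv with hv | hv <;> simp_all

lemma eq_of_cnum1_mem {j : Fin m} (hg : g ∈ U12 n m lit occP occN) (hv : cnum j 1 ∈ g) :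
    g = s(cnum j 1, ca j) ∨ g = s(cnum j 1, cb j) := by
  rcases hg with ⟨_, h | h | h | h⟩ | ⟨_, h | h⟩ | ⟨_, _, h | h⟩ | ⟨_, _, _, ⟨_, h⟩ | ⟨_, h⟩⟩ <;>
    subst h <;> rcases Sym2.mem_iff.1 hv with hv | hv <;> simp_all

lemma eq_of_cnum2_mem {j : Fin m} (hg : g ∈ U12 n m lit occP occN) (hv : cnum j 2 ∈ g) :
    g = s(cnum j 2, cb j) := by
  rcases hg with ⟨_, h | h | h | h⟩ | ⟨_, h | h⟩ | ⟨_, _, h | h⟩ | ⟨_, _, _, ⟨_, h⟩ | ⟨_, h⟩⟩ <;>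
    subst h <;> rcases Sym2.mem_iff.1 hv with hv | hv <;> simp_all

lemma eq_of_v1_mem {i : Fin n} (hg : g ∈ U12 n m lit occP occN) (hv : v1 i ∈ g) :
    g = s(v1 i, v3 i) := by
  rcases hg with ⟨_, h | h | h | h⟩ | ⟨_, h | h⟩ | ⟨_, _, h | h⟩ | ⟨_, _, _, ⟨_, h⟩ | ⟨_, h⟩⟩ <;>
    subst h <;> rcases Sym2.mem_iff.1 hv with hv | hv <;> simp_all

lemma eq_of_v2_mem {i : Fin n} (hg : g ∈ U12 n m lit occP occN) (hv : v2 i ∈ g) :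
    g = s(v2 i, v3 i) := by
  rcases hg with ⟨_, h | h | h | h⟩ | ⟨_, h | h⟩ | ⟨_, _, h | h⟩ | ⟨_, _, _, ⟨_, h⟩ | ⟨_, h⟩⟩ <;>
    subst h <;> rcases Sym2.mem_iff.1 hv with hv | hv <;> simp_all

lemma eq_of_p1_mem {i : Fin n} {t : Fin 2} (hg : g ∈ U12 n m lit occP occN) (hv : p1 i t ∈ g) :
    g = s(p1 i t, posOcc i t) := by
  rcases hg with ⟨_, h | h | h | h⟩ | ⟨_, h | h⟩ | ⟨_, _, h | h⟩ | ⟨_, _, _, ⟨_, h⟩ | ⟨_, h⟩⟩ <;>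
    subst h <;> rcases Sym2.mem_iff.1 hv with hv | hv <;> simp_all

lemma eq_of_p2_mem {i : Fin n} {t : Fin 2} (hg : g ∈ U12 n m lit occP occN) (hv : p2 i t ∈ g) :
    g = s(p2 i t, negOcc i t) := by
  rcases hg with ⟨_, h | h | h | h⟩ | ⟨_, h | h⟩ | ⟨_, _, h | h⟩ | ⟨_, _, _, ⟨_, h⟩ | ⟨_, h⟩⟩ <;>
    subst h <;> rcases Sym2.mem_iff.1 hv with hv | hv <;> simp_all

end U12

section Reverse
open V12

variable {n m : ℕ} {lit : Fin m → Fin 3 → Fin n × Bool} {occP occN : Fin n → Fin 2 → Fin m}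
  {S : Set (Sym2 (V12 n m))}

lemma disjoint_F12_U12 : Disjoint (F12 n m) (U12 n m lit occP occN) := by
  refine Set.disjoint_left.2 fun e hF hU => ?_
  rcases hF with ⟨_, _, h⟩ | ⟨_, _, h | h⟩ | ⟨_, h⟩ <;> subst h <;>
  rcases hU with ⟨_, h | h | h | h⟩ | ⟨_, h | h⟩ | ⟨_, _, h | h⟩ | ⟨_, _, _, ⟨_, h⟩ | ⟨_, h⟩⟩ <;>
    simp_all

lemma exists_saturates_of_mem_F12 (hsub : S ⊆ U12 n m lit occP occN) (hS : IsMatchingSet S)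
    (hmax : ∀ e ∈ E12 n m lit occP occN \ S, ¬ IsMatchingSet (insert e S))
    {f : Sym2 (V12 n m)} (hf : f ∈ F12 n m) : ∃ v ∈ f, Saturates S v := by
  have hfS : f ∉ S := fun h => Set.disjoint_left.1 disjoint_F12_U12 hf (hsub h)
  by_contra! hfree
  exact hmax f ⟨Or.inr hf, hfS⟩ ((hS.insert_iff hfS).2 hfree)

lemma exists_saturates_lv (hsub : S ⊆ U12 n m lit occP occN) (hS : IsMatchingSet S)
    (hsat : ∀ f ∈ F12 n m, ∃ v ∈ f, Saturates S v) (j : Fin m) :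
    ∃ k, Saturates S (lv j k) := by
  by_contra! hfree
  have hcnum (k : Fin 3) : Saturates S (cnum j k) := by
    obtain ⟨v, hv, hsv⟩ := hsat _ (Or.inl ⟨j, k, rfl⟩)
    rcases Sym2.mem_iff.1 hv with rfl | rfl
    · exact absurd hsv (hfree k)
    · exact hsv
  obtain ⟨g0, hg0, h0⟩ := hcnum 0
  obtain ⟨g1, hg1, h1⟩ := hcnum 1
  obtain ⟨g2, hg2, h2⟩ := hcnum 2
  rw [U12.eq_of_cnum0_mem (hsub hg0) h0] at hg0
  rw [U12.eq_of_cnum2_mem (hsub hg2) h2] at hg2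
  rcases U12.eq_of_cnum1_mem (hsub hg1) h1 with rfl | rfl
  · have := hS.eq_of_mem_of_mem hg0 hg1 (v := ca j) (by simp) (by simp)
    simp at this
  · have := hS.eq_of_mem_of_mem hg1 hg2 (v := cb j) (by simp) (by simp)
    simp at this

lemma v1_v3_mem_of_posOcc_mem (hsub : S ⊆ U12 n m lit occP occN) (hS : IsMatchingSet S)
    (hsat : ∀ f ∈ F12 n m, ∃ v ∈ f, Saturates S v) {i : Fin n} {t : Fin 2} {j : Fin m}
    {k : Fin 3} (hg : s(posOcc i t, lv j k) ∈ S) : s(v1 i, v3 i) ∈ S := by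
  obtain ⟨v, hv, g, hg', hvg⟩ := hsat _ (Or.inr (Or.inl ⟨i, t, Or.inl rfl⟩))
  rcases Sym2.mem_iff.1 hv with rfl | rfl
  · rwa [U12.eq_of_v1_mem (hsub hg') hvg] at hg'
  · rw [U12.eq_of_p1_mem (hsub hg') hvg] at hg'
    have := hS.eq_of_mem_of_mem hg' hg (v := posOcc i t) (by simp) (by simp)
    simp at this

lemma v1_v3_not_mem_of_negOcc_mem (hsub : S ⊆ U12 n m lit occP occN) (hS : IsMatchingSet S)
    (hsat : ∀ f ∈ F12 n m, ∃ v ∈ f, Saturates S v) {i : Fin n} {t : Fin 2} {j : Fin m}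
    {k : Fin 3} (hg : s(negOcc i t, lv j k) ∈ S) : s(v1 i, v3 i) ∉ S := by
  obtain ⟨v, hv, g, hg', hvg⟩ := hsat _ (Or.inr (Or.inl ⟨i, t, Or.inr rfl⟩))
  rcases Sym2.mem_iff.1 hv with rfl | rfl
  · rw [U12.eq_of_v2_mem (hsub hg') hvg] at hg'
    intro h13
    have := hS.eq_of_mem_of_mem hg' h13 (v := v3 i) (by simp) (by simp)
    simp at this
  · rw [U12.eq_of_p2_mem (hsub hg') hvg] at hg'
    have := hS.eq_of_mem_of_mem hg' hg (v := negOcc i t) (by simp) (by simp)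
    simp at this

lemma satisfiable_of_maximal_matching (hsub : S ⊆ U12 n m lit occP occN) (hS : IsMatchingSet S)
    (hmax : ∀ e ∈ E12 n m lit occP occN \ S, ¬ IsMatchingSet (insert e S)) :
    ∃ T : Fin n → Bool, ∀ j : Fin m, ∃ k : Fin 3, T (lit j k).1 = (lit j k).2 := by
  classical
  have hsat f hf := exists_saturates_of_mem_F12 hsub hS hmax (f := f) hf
  refine ⟨fun i => decide (s(v1 i, v3 i) ∈ S), fun j => ?_⟩
  obtain ⟨k, g, hg, hk⟩ := exists_saturates_lv hsub hS hsat j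
  refine ⟨k, ?_⟩
  rcases U12.eq_of_lv_mem (hsub hg) hk with ⟨i, t, hl, rfl⟩ | ⟨i, t, hl, rfl⟩ <;>
    simp only [hl, decide_eq_true_eq, decide_eq_false_iff_not]
  · exact v1_v3_mem_of_posOcc_mem hsub hS hsat hg
  · exact v1_v3_not_mem_of_negOcc_mem hsub hS hsat hg

end Reverse

theorem stmt_12_general (n m : ℕ) (lit : Fin m → Fin 3 → Fin n × Bool)
    (occP occN : Fin n → Fin 2 → Fin m)
    (hdist : ∀ j : Fin m, Function.Injective fun k : Fin 3 => (lit j k).1)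
    (hoccP : ∀ i t, ∃ k : Fin 3, lit (occP i t) k = (i, true))
    (hoccPinj : ∀ i : Fin n, occP i 0 ≠ occP i 1)
    (hoccPall : ∀ (i : Fin n) (j : Fin m) (k : Fin 3),
      lit j k = (i, true) → ∃ t : Fin 2, occP i t = j)
    (hoccN : ∀ i t, ∃ k : Fin 3, lit (occN i t) k = (i, false))
    (hoccNinj : ∀ i : Fin n, occN i 0 ≠ occN i 1)
    (hoccNall : ∀ (i : Fin n) (j : Fin m) (k : Fin 3),
      lit j k = (i, false) → ∃ t : Fin 2, occN i t = j) :
    (∃ T : Fin n → Bool, ∀ j : Fin m, ∃ k : Fin 3, T (lit j k).1 = (lit j k).2) ↔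
      (∃ S : Set (Sym2 (V12 n m)), S ⊆ U12 n m lit occP occN ∧ IsMatchingSet S ∧
        ∀ e ∈ E12 n m lit occP occN \ S, ¬ IsMatchingSet (insert e S)) := by
  refine ⟨fun ⟨T, hT⟩ => ?_,
    fun ⟨S, hsub, hS, hmax⟩ => satisfiable_of_maximal_matching hsub hS hmax⟩
  choose u hu using hT
  choose kP hkP using hoccP
  choose kN hkN using hoccN
  let S := partnerMatching (U12 n m lit occP occN) (V12.partner lit occP occN T u kP kN)
  have hS : IsMatchingSet S := isMatchingSet_partnerMatching _ _
  refine ⟨S, partnerMatching_subset _ _, hS, fun e he => ?_⟩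
  rw [hS.insert_iff he.2]
  simpa using
    V12.exists_saturates_of_mem_E12 hdist hkP hkN hoccPinj hoccNinj hoccPall hoccNall hu he.1

/-- a (3,B2)-SAT instance is satisfiable iff the constructed graph has a
maximal matching consisting of permitted edges only. -/
theorem stmt_12 (n m : ℕ) (lit : Fin m → Fin 3 → Fin n × Bool)
    (occP occN : Fin n → Fin 2 → Fin m)
    (hdist : ∀ j : Fin m, Function.Injective fun k : Fin 3 => (lit j k).1)
    (hpos : ∀ v : Fin n,
      (Finset.univ.filter fun p : Fin m × Fin 3 => lit p.1 p.2 = (v, true)).card = 2)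
    (hneg : ∀ v : Fin n,
      (Finset.univ.filter fun p : Fin m × Fin 3 => lit p.1 p.2 = (v, false)).card = 2)
    (hoccP : ∀ i t, ∃ k : Fin 3, lit (occP i t) k = (i, true))
    (hoccPinj : ∀ i : Fin n, occP i 0 ≠ occP i 1)
    (hoccPall : ∀ (i : Fin n) (j : Fin m) (k : Fin 3),
      lit j k = (i, true) → ∃ t : Fin 2, occP i t = j)
    (hoccN : ∀ i t, ∃ k : Fin 3, lit (occN i t) k = (i, false))
    (hoccNinj : ∀ i : Fin n, occN i 0 ≠ occN i 1)
    (hoccNall : ∀ (i : Fin n) (j : Fin m) (k : Fin 3),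
      lit j k = (i, false) → ∃ t : Fin 2, occN i t = j) :
    (∃ T : Fin n → Bool, ∀ j : Fin m, ∃ k : Fin 3, T (lit j k).1 = (lit j k).2) ↔
      (∃ S : Set (Sym2 (V12 n m)), S ⊆ U12 n m lit occP occN ∧ IsMatchingSet S ∧
        ∀ e ∈ E12 n m lit occP occN \ S, ¬ IsMatchingSet (insert e S)) :=
  stmt_12_general n m lit occP occN hdist hoccP hoccPinj hoccPall hoccN hoccNinj hoccNall
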